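/- arXiv:math/0609130 — 3 statements merged into one kernel-verified Lean document; each statement's English description precedes it below -/
import Mathlib

section
/- For positive semidefinite matrices A and B of the same size, A² + B² ≥ ((A+B)/2)^{1/2} (A + B) ((A+B)/2)^{1/2} in the Loewner (positive semidefinite) order. -/
open scoped ComplexOrder Matrix

/-! Writing `S` for the square root of `M = (A + B) / 2`, the conjugate `S (A + B) S = 2 S⁴` is
`2 M² = (A + B)² / 2`, and `A² + B² - (A + B)² / 2 = (A - B)² / 2`, a square of a Hermitian matrix. -/

/-- `eigDesc M j` : the `j`-th largest (0-indexed) real part of the eigenvalues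
(roots of the characteristic polynomial, with multiplicity) of `M`. -/
noncomputable def eigDesc {m : Type*} [Fintype m] [DecidableEq m]
    (M : Matrix m m ℂ) (j : ℕ) : ℝ :=
  ((M.charpoly.roots.map Complex.re).sort (· ≥ ·)).getD j 0

/-- `svalDesc K j` : the `j`-th largest (0-indexed) singular value of `K`. -/
noncomputable def svalDesc {m n : Type*} [Fintype m] [Fintype n] [DecidableEq n]
    (K : Matrix m n ℂ) (j : ℕ) : ℝ :=
  Real.sqrt (eigDesc (Kᴴ * K) j)

/-- Real power of a Hermitian matrix, via the functional calculus. -/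
noncomputable def Matrix.IsHermitian.rpow {n : Type*} [Fintype n] [DecidableEq n]
    {A : Matrix n n ℂ} (hA : A.IsHermitian) (r : ℝ) : Matrix n n ℂ :=
  hA.cfc (fun x => x ^ r)

/-- The positive semidefinite square root of a positive semidefinite matrix
(the definition `Matrix.PosSemidef.sqrt` of the older Mathlib, since removed). -/
noncomputable def Matrix.PosSemidef.sqrt {n 𝕜 : Type*} [Fintype n] [RCLike 𝕜] [DecidableEq n]
    {A : Matrix n n 𝕜} (hA : A.PosSemidef) : Matrix n n 𝕜 :=
  hA.1.eigenvectorUnitary.1 * Matrix.diagonal ((↑) ∘ (√·) ∘ hA.1.eigenvalues) *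
    (star hA.1.eigenvectorUnitary : Matrix n n 𝕜)

lemma Matrix.PosSemidef.sqrt_mul_self {n 𝕜 : Type*} [Fintype n] [RCLike 𝕜] [DecidableEq n]
    {A : Matrix n n 𝕜} (hA : A.PosSemidef) : hA.sqrt * hA.sqrt = A := by
  have hdiag : diagonal (((↑) ∘ (√·) ∘ hA.1.eigenvalues : n → 𝕜)) *
      diagonal ((↑) ∘ (√·) ∘ hA.1.eigenvalues) = diagonal (RCLike.ofReal ∘ hA.1.eigenvalues) := by
    rw [diagonal_mul_diagonal]
    congr 1; funext i
    simp only [Function.comp, ← RCLike.ofReal_mul, Real.mul_self_sqrt (hA.eigenvalues_nonneg i)]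
  conv_rhs => rw [hA.1.spectral_theorem, ← hdiag, map_mul]
  rfl

theorem mul_mul_eq_smul_sq_of_mul_self_eq_smul {𝕜 R : Type*} [Field 𝕜] [Ring R] [Algebra 𝕜 R]
    {c : 𝕜} (hc : c ≠ 0) {s x : R} (hs : s * s = c • x) : s * x * s = c • x ^ 2 := by
  have hx : x = c⁻¹ • (s * s) := by rw [hs, inv_smul_smul₀ hc]
  calc s * x * s = c⁻¹ • ((s * s) * (s * s)) := by
        rw [hx, mul_smul_comm, smul_mul_assoc]; simp only [mul_assoc]
    _ = c • x ^ 2 := by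
        rw [hs, smul_mul_smul_comm, smul_smul, ← sq, ← sq, sq c, inv_mul_cancel_left₀ hc]

theorem sq_add_sq_sub_half_smul_add_sq {𝕜 R : Type*} [DivisionRing 𝕜] [NeZero (2 : 𝕜)] [Ring R]
    [Module 𝕜 R] (a b : R) :
    a ^ 2 + b ^ 2 - (2 : 𝕜)⁻¹ • (a + b) ^ 2 = (2 : 𝕜)⁻¹ • (a - b) ^ 2 := by
  rw [← smul_right_inj (two_ne_zero (α := 𝕜)), smul_sub, smul_inv_smul₀ two_ne_zero,
    smul_inv_smul₀ two_ne_zero, two_smul]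
  noncomm_ring

theorem sq_add_sq_ge_sqrt_mean_conj {n : ℕ} {A B : Matrix (Fin n) (Fin n) ℂ}
    (hA : A.PosSemidef) (hB : B.PosSemidef)
    (hM : ((2 : ℂ)⁻¹ • (A + B)).PosSemidef) :
    (A ^ 2 + B ^ 2 - hM.sqrt * (A + B) * hM.sqrt).PosSemidef := by
  have hconj : hM.sqrt * (A + B) * hM.sqrt = (2 : ℂ)⁻¹ • (A + B) ^ 2 :=
    mul_mul_eq_smul_sq_of_mul_self_eq_smul (inv_ne_zero two_ne_zero) hM.sqrt_mul_self
  have hsq : ((A - B) ^ 2).PosSemidef := by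
    simpa only [sq, (hA.1.sub hB.1).eq] using Matrix.posSemidef_conjTranspose_mul_self (A - B)
  rw [hconj, sq_add_sq_sub_half_smul_add_sq]
  exact hsq.smul (inv_nonneg.mpr zero_le_two)
end

section
/- For positive semidefinite matrices A and B and any real r with 0 ≤ r ≤ 1, A^{r+1} + B^{r+1} ≥ ((A+B)/2)^{1/2} (A^r + B^r) ((A+B)/2)^{1/2} in the Loewner order. -/
open scoped ComplexOrder Matrix

/-!
For `0 < r < 1`, `x ^ r` is a positive multiple of `∫ t ^ (r - 1) h_t x` over `t > 0`, where
`h_t x = x (t + x)⁻¹`, and `x ^ (r + 1) = x * x ^ r`. So it suffices to show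
`c (h_t a + h_t b) c ≤ a h_t a + b h_t b` for every `t > 0`, where `c² = m = (a + b) / 2`.
With `Q x = (t + x)⁻¹` one has `x h_t x = x - t + t² Q x` and `1 = t Q m + c (Q m) c`, so the
difference of the two sides is `t (t R + c R c)` with `R = Q a + Q b - 2 Q m`, and `R ≥ 0` is the
operator convexity of `x ↦ (t + x)⁻¹`. At `r = 0` both sides agree, and at `r = 1` the difference
is `(a - b)² / 2`.
-/

namespace CStarAlgebra

open MeasureTheory Set Real
open scoped NNReal

variable {A : Type*} [CStarAlgebra A] [PartialOrder A] [StarOrderedRing A]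

lemma isUnit_algebraMap_add {t : ℝ} (ht : 0 < t) {x : A} (hx : 0 ≤ x) :
    IsUnit (algebraMap ℝ A t + x) :=
  (show IsStrictlyPositive (algebraMap ℝ A t + x) by grind).isUnit

lemma mul_ringInverse_algebraMap_add {t : ℝ} (ht : 0 < t) {x : A} (hx : 0 ≤ x) :
    x * Ring.inverse (algebraMap ℝ A t + x) = 1 - t • Ring.inverse (algebraMap ℝ A t + x) := by
  rw [eq_sub_iff_add_eq', Algebra.smul_def, ← add_mul,
    Ring.mul_inverse_cancel _ (isUnit_algebraMap_add ht hx)]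

lemma ringInverse_algebraMap_add_mul {t : ℝ} (ht : 0 < t) {x : A} (hx : 0 ≤ x) :
    Ring.inverse (algebraMap ℝ A t + x) * x = 1 - t • Ring.inverse (algebraMap ℝ A t + x) := by
  rw [eq_sub_iff_add_eq', Algebra.smul_def, Algebra.commutes, ← mul_add,
    Ring.inverse_mul_cancel _ (isUnit_algebraMap_add ht hx)]

lemma commute_ringInverse_algebraMap_add_mul_self {t : ℝ} (ht : 0 < t) {c : A}
    (hc : 0 ≤ c * c) : Commute c (Ring.inverse (algebraMap ℝ A t + c * c)) := by
  obtain ⟨u, hu⟩ := isUnit_algebraMap_add ht hc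
  rw [← hu, Ring.inverse_unit]
  refine Commute.units_inv_right ?_
  rw [hu]
  exact (Algebra.commute_algebraMap_right t c).add_right (Commute.mul_right rfl rfl)

lemma conj_add_mul_ringInverse_le {a b c : A} (ha : 0 ≤ a) (hb : 0 ≤ b) (hc : IsSelfAdjoint c)
    (hcc : c * c = (2 : ℝ)⁻¹ • (a + b)) {t : ℝ} (ht : 0 < t) :
    c * (a * Ring.inverse (algebraMap ℝ A t + a) + b * Ring.inverse (algebraMap ℝ A t + b)) * c ≤
      a * (a * Ring.inverse (algebraMap ℝ A t + a)) +
        b * (b * Ring.inverse (algebraMap ℝ A t + b)) := by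
  have hm : 0 ≤ c * c := hcc ▸ smul_nonneg (by norm_num) (add_nonneg ha hb)
  set Qa := Ring.inverse (algebraMap ℝ A t + a)
  set Qb := Ring.inverse (algebraMap ℝ A t + b)
  set Qm := Ring.inverse (algebraMap ℝ A t + c * c)
  have hconvex : Qm ≤ (2 : ℝ)⁻¹ • Qa + (2 : ℝ)⁻¹ • Qb := by
    have := (convexOn_ringInverse_algebraMap_add ht).2 ha hb
      (by norm_num : (0 : ℝ) ≤ 2⁻¹) (by norm_num : (0 : ℝ) ≤ 2⁻¹) (by norm_num)
    rwa [← smul_add, ← hcc] at this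
  have hD : 0 ≤ Qa + Qb - (2 : ℝ) • Qm := by
    rw [sub_nonneg]
    calc (2 : ℝ) • Qm ≤ (2 : ℝ) • ((2 : ℝ)⁻¹ • Qa + (2 : ℝ)⁻¹ • Qb) := by gcongr
      _ = Qa + Qb := by module
  have hcQmc : c * Qm * c = 1 - t • Qm := by
    rw [(commute_ringInverse_algebraMap_add_mul_self ht hm).eq, mul_assoc,
      ringInverse_algebraMap_add_mul ht hm]
  have key : a * (a * Qa) + b * (b * Qb) - c * (a * Qa + b * Qb) * c =
      t • (t • (Qa + Qb - (2 : ℝ) • Qm) + c * (Qa + Qb - (2 : ℝ) • Qm) * c) := by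
    have haQ : a * Qa = 1 - t • Qa := mul_ringInverse_algebraMap_add ht ha
    have hbQ : b * Qb = 1 - t • Qb := mul_ringInverse_algebraMap_add ht hb
    simp only [haQ, hbQ, mul_sub, sub_mul, mul_add, add_mul, mul_one, mul_smul_comm,
      smul_mul_assoc, hcQmc, hcc]
    module
  rw [← sub_nonneg, key]
  exact smul_nonneg ht.le <|
    add_nonneg (smul_nonneg ht.le hD) (IsSelfAdjoint.conjugate_nonneg hD hc)

lemma cfc_rpowIntegrand₀₁_eq_smul_mul_ringInverse {r t : ℝ} (hr : r ≠ 1) (ht : 0 < t) {x : A}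
    (hx : 0 ≤ x) :
    cfc (rpowIntegrand₀₁ r t) x = t ^ (r - 1) • (x * Ring.inverse (algebraMap ℝ A t + x)) := by
  have hspec : ∀ s ∈ spectrum ℝ x, t + s ≠ 0 := by grind
  have hinv : ContinuousOn (fun s : ℝ => (t + s)⁻¹) (spectrum ℝ x) := by
    fun_prop (disch := grind -abstractProof)
  rw [rpowIntegrand₀₁_eq_sub hr ht, cfc_sub (fun _ => t ^ (r - 1)) (fun s => t ^ r * (t + s)⁻¹) x
      continuousOn_const (continuousOn_const.mul hinv),
    cfc_const (t ^ (r - 1)) x, cfc_const_mul (t ^ r) (fun s => (t + s)⁻¹) x hinv,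
    cfc_inv (fun s => t + s) x hspec, cfc_const_add t (fun s => s) x, cfc_id' ℝ x,
    mul_ringInverse_algebraMap_add ht hx, smul_sub, Algebra.algebraMap_eq_smul_one, smul_smul,
    ← rpow_add_one ht.ne' (r - 1), sub_add_cancel]

lemma exists_measure_rpow_eq_integral_cfc_rpowIntegrand₀₁ {r : ℝ} (hr : r ∈ Ioo 0 1) :
    ∃ μ : Measure ℝ, ∀ x : A, 0 ≤ x →
      IntegrableOn (fun t => cfc (rpowIntegrand₀₁ r t) x) (Ioi 0) μ ∧
        x ^ r = ∫ t in Ioi 0, cfc (rpowIntegrand₀₁ r t) x ∂μ := by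
  let p : ℝ≥0 := ⟨r, hr.1.le⟩
  obtain ⟨μ, hμ⟩ := CFC.exists_measure_nnrpow_eq_integral_cfcₙ_rpowIntegrand₀₁ A (p := p)
    (by exact_mod_cast hr)
  refine ⟨μ, fun x hx => ?_⟩
  have hcfc : EqOn (fun t => cfcₙ (rpowIntegrand₀₁ r t) x) (fun t => cfc (rpowIntegrand₀₁ r t) x)
      (Ioi 0) := fun t ht =>
    cfcₙ_eq_cfc ((continuousOn_rpowIntegrand₀₁_Ici hr ht).mono (by grind))
      rpowIntegrand₀₁_zero_right
  obtain ⟨hint, heq⟩ := hμ x hx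
  refine ⟨hint.congr_fun hcfc measurableSet_Ioi, ?_⟩
  calc x ^ r = x ^ p := (CFC.nnrpow_eq_rpow (show 0 < p from hr.1)).symm
    _ = _ := heq
    _ = _ := setIntegral_congr_fun measurableSet_Ioi hcfc

lemma rpow_add_one_eq_mul_rpow {x : A} (hx : 0 ≤ x) {r : ℝ} (hr : 0 ≤ r) :
    x ^ (r + 1) = x * x ^ r := by
  rw [CFC.rpow_eq_cfc_real hx, CFC.rpow_eq_cfc_real hx,
    cfc_congr (g := fun s => s * s ^ r) fun s hs => ?_, cfc_mul (fun s => s) _ x, cfc_id' ℝ x]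
  rw [rpow_add_one' (by grind) (by positivity), mul_comm]

lemma conj_rpow_add_rpow_le_of_mem_Ioo {a b c : A} (ha : 0 ≤ a) (hb : 0 ≤ b)
    (hc : IsSelfAdjoint c) (hcc : c * c = (2 : ℝ)⁻¹ • (a + b)) {r : ℝ} (hr : r ∈ Ioo 0 1) :
    c * (a ^ r + b ^ r) * c ≤ a ^ (r + 1) + b ^ (r + 1) := by
  obtain ⟨μ, hμ⟩ := exists_measure_rpow_eq_integral_cfc_rpowIntegrand₀₁ (A := A) hr
  let Φ (x : A) : A →L[ℝ] A :=
    ContinuousLinearMap.mul ℝ A x - ContinuousLinearMap.mulLeftRight ℝ A c c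
  have hΦ (x : A) (hx : 0 ≤ x) :
      Φ x (x ^ r) = ∫ t in Ioi 0, Φ x (cfc (rpowIntegrand₀₁ r t) x) ∂μ := by
    rw [(Φ x).integral_comp_comm (hμ x hx).1, ← (hμ x hx).2]
  have hint (x : A) (hx : 0 ≤ x) :
      IntegrableOn (fun t => Φ x (cfc (rpowIntegrand₀₁ r t) x)) (Ioi 0) μ :=
    (Φ x).integrable_comp (hμ x hx).1
  rw [← sub_nonneg, rpow_add_one_eq_mul_rpow ha hr.1.le, rpow_add_one_eq_mul_rpow hb hr.1.le]
  calc 0 ≤ ∫ t in Ioi 0,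
        (Φ a (cfc (rpowIntegrand₀₁ r t) a) + Φ b (cfc (rpowIntegrand₀₁ r t) b)) ∂μ := by
        refine integral_nonneg_of_ae ?_
        filter_upwards [ae_restrict_mem measurableSet_Ioi] with t ht
        have := smul_le_smul_of_nonneg_left (conj_add_mul_ringInverse_le ha hb hc hcc ht)
          (rpow_nonneg ht.le (r - 1))
        simp only [Φ, sub_apply, ContinuousLinearMap.mul_apply',
          ContinuousLinearMap.mulLeftRight_apply,
          cfc_rpowIntegrand₀₁_eq_smul_mul_ringInverse hr.2.ne ht ha,
          cfc_rpowIntegrand₀₁_eq_smul_mul_ringInverse hr.2.ne ht hb, Pi.zero_apply]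
        rw [← sub_nonneg] at this
        convert this using 1
        simp only [mul_smul_comm, smul_mul_assoc, smul_add, mul_add, add_mul]
        abel
    _ = Φ a (a ^ r) + Φ b (b ^ r) := by rw [integral_add (hint a ha) (hint b hb), hΦ a ha, hΦ b hb]
    _ = a * a ^ r + b * b ^ r - c * (a ^ r + b ^ r) * c := by
        simp only [Φ, sub_apply, ContinuousLinearMap.mul_apply',
          ContinuousLinearMap.mulLeftRight_apply]
        noncomm_ring

lemma conj_add_le_mul_self_add_mul_self {a b c : A} (ha : IsSelfAdjoint a) (hb : IsSelfAdjoint b)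
    (hcc : c * c = (2 : ℝ)⁻¹ • (a + b)) :
    c * (a + b) * c ≤ a * a + b * b := by
  have hab : a + b = (2 : ℝ) • (c * c) := by rw [hcc, smul_smul]; norm_num
  have key : a * a + b * b - c * (a + b) * c = (2 : ℝ)⁻¹ • ((a - b) * (a - b)) := by
    rw [hab, mul_smul_comm, smul_mul_assoc, ← mul_assoc, mul_assoc (c * c), hcc]
    simp only [mul_add, add_mul, mul_sub, sub_mul, smul_mul_assoc, mul_smul_comm, smul_smul]
    module
  rw [← sub_nonneg, key]
  exact smul_nonneg (by norm_num) (ha.sub hb).mul_self_nonneg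

theorem conj_rpow_add_rpow_le_rpow_add_one_add {a b c : A} (ha : 0 ≤ a) (hb : 0 ≤ b)
    (hc : IsSelfAdjoint c) (hcc : c * c = (2 : ℝ)⁻¹ • (a + b)) {r : ℝ} (hr0 : 0 ≤ r)
    (hr1 : r ≤ 1) :
    c * (a ^ r + b ^ r) * c ≤ a ^ (r + 1) + b ^ (r + 1) := by
  rcases hr0.eq_or_lt with rfl | hr0
  · rw [zero_add, CFC.rpow_zero a, CFC.rpow_zero b, CFC.rpow_one a, CFC.rpow_one b, mul_add,
      add_mul, mul_one, hcc]
    exact le_of_eq (by module)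
  rcases hr1.eq_or_lt with rfl | hr1
  · rw [rpow_add_one_eq_mul_rpow ha zero_le_one, rpow_add_one_eq_mul_rpow hb zero_le_one,
      CFC.rpow_one a, CFC.rpow_one b]
    exact conj_add_le_mul_self_add_mul_self ha.isSelfAdjoint hb.isSelfAdjoint hcc
  exact conj_rpow_add_rpow_le_of_mem_Ioo ha hb hc hcc ⟨hr0, hr1⟩

end CStarAlgebra

namespace Matrix

namespace PosSemidef

variable {n 𝕜 : Type*} [Fintype n] [DecidableEq n] [RCLike 𝕜] {A : Matrix n n 𝕜}

lemma sqrt_eq_cfc (hA : A.PosSemidef) : hA.sqrt = cfc Real.sqrt A := by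
  rw [hA.1.cfc_eq]
  rfl

lemma isHermitian_sqrt (hA : A.PosSemidef) : hA.sqrt.IsHermitian := by
  rw [sqrt_eq_cfc]
  exact cfc_predicate _ _

lemma sqrt_mul_self_s2 (hA : A.PosSemidef) : hA.sqrt * hA.sqrt = A := by
  rw [sqrt_eq_cfc, ← cfc_mul Real.sqrt Real.sqrt A,
    cfc_congr (g := fun x => x) fun x hx => Real.mul_self_sqrt ?_]
  · exact cfc_id' ℝ A hA.1
  obtain ⟨i, rfl⟩ := hA.1.spectrum_real_eq_range_eigenvalues ▸ hx
  exact hA.eigenvalues_nonneg i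

end PosSemidef

section L2Operator

open scoped Norms.L2Operator MatrixOrder

variable {n : Type*} [Fintype n] [DecidableEq n] {A B C : Matrix n n ℂ}

lemma PosSemidef.isHermitian_rpow_eq_rpow (hA : A.PosSemidef) (r : ℝ) :
    hA.1.rpow r = A ^ r := by
  rw [CFC.rpow_eq_cfc_real hA.nonneg, hA.1.cfc_eq]
  rfl

lemma posSemidef_rpow_add_one_sub_conj_rpow (hA : A.PosSemidef) (hB : B.PosSemidef)
    (hC : C.IsHermitian) (hCC : C * C = (2 : ℂ)⁻¹ • (A + B)) {r : ℝ} (hr0 : 0 ≤ r) (hr1 : r ≤ 1) :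
    (hA.1.rpow (r + 1) + hB.1.rpow (r + 1) - C * (hA.1.rpow r + hB.1.rpow r) * C).PosSemidef := by
  simp only [hA.isHermitian_rpow_eq_rpow, hB.isHermitian_rpow_eq_rpow, ← le_iff]
  refine CStarAlgebra.conj_rpow_add_rpow_le_rpow_add_one_add hA.nonneg hB.nonneg hC ?_ hr0 hr1
  rw [hCC, ← Complex.coe_smul]
  norm_num

end L2Operator

end Matrix

theorem rpow_add_one_ge_sqrt_mean_conj {n : ℕ} {A B : Matrix (Fin n) (Fin n) ℂ}
    (hA : A.PosSemidef) (hB : B.PosSemidef) (r : ℝ) (hr0 : 0 ≤ r) (hr1 : r ≤ 1)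
    (hM : ((2 : ℂ)⁻¹ • (A + B)).PosSemidef) :
    (hA.1.rpow (r + 1) + hB.1.rpow (r + 1)
      - hM.sqrt * (hA.1.rpow r + hB.1.rpow r) * hM.sqrt).PosSemidef :=
  Matrix.posSemidef_rpow_add_one_sub_conj_rpow hA hB hM.isHermitian_sqrt hM.sqrt_mul_self_s2 hr0 hr1
end

section
/- Let Z = [[M, K],[K*, N]] be a positive semidefinite 2×2 block matrix with M of size m×m and N of size n×n. Then for every j ≤ min(m,n), the j-th largest singular value of the off-diagonal block K satisfies σ_j(K) ≤ (1/2) λ_j(Z), where λ_j(Z) is the j-th largest eigenvalue of Z. -/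
open scoped ComplexOrder Matrix

/-!
The real parts of the quadratic form of `Z` at `x = (u, w)` and at `(u, -w)` differ by
`4 re ⟪u, K w⟫`, and the second one is nonnegative; so `re ⟪x, Z x⟫ ≥ 4 re ⟪u, K w⟫`.
For `v` in the span of the top `j + 1` eigenvectors of `Kᴴ K` one has `‖K v‖ ≥ σⱼ ‖v‖`, so the
vector `x = (K v, σⱼ v)` satisfies `re ⟪x, Z x⟫ ≥ 4 σⱼ ‖K v‖² ≥ 2 σⱼ ‖x‖²`. These `x` form a
`(j + 1)`-dimensional space when `σⱼ > 0`, and the max–min characterisation of `λⱼ(Z)` gives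
`λⱼ(Z) ≥ 2 σⱼ`.
-/

open Module RCLike
open scoped InnerProductSpace

theorem eigDesc_eq_eigenvalues₀ {ι : Type*} [Fintype ι] [DecidableEq ι] {A : Matrix ι ι ℂ}
    (hA : A.IsHermitian) {j : ℕ} (hj : j < Fintype.card ι) :
    eigDesc A j = hA.eigenvalues₀ ⟨j, hj⟩ := by
  rw [eigDesc, show Complex.re = RCLike.re from rfl, hA.sort_roots_charpoly_eq_eigenvalues₀,
    List.getD_eq_getElem _ _ (by simpa using hj), List.getElem_ofFn]

namespace LinearMap.IsSymmetric

variable {𝕜 E : Type*} [RCLike 𝕜] [NormedAddCommGroup E] [InnerProductSpace 𝕜 E]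
  [FiniteDimensional 𝕜 E] {T : E →ₗ[𝕜] E} (hT : T.IsSymmetric) {n : ℕ} (hn : finrank 𝕜 E = n)

theorem re_inner_apply_self_eq_sum (x : E) :
    re ⟪x, T x⟫_𝕜 = ∑ i, hT.eigenvalues hn i * ‖(hT.eigenvectorBasis hn).repr x i‖ ^ 2 := by
  rw [← (hT.eigenvectorBasis hn).repr.inner_map_map, PiLp.inner_apply, map_sum]
  refine Finset.sum_congr rfl fun i _ => ?_
  rw [hT.eigenvectorBasis_apply_self_apply, RCLike.inner_apply, mul_assoc, RCLike.mul_conj]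
  norm_cast

theorem re_inner_apply_self_le {i : Fin n} {x : E}
    (hx : ∀ k < i, (hT.eigenvectorBasis hn).repr x k = 0) :
    re ⟪x, T x⟫_𝕜 ≤ hT.eigenvalues hn i * ‖x‖ ^ 2 := by
  rw [hT.re_inner_apply_self_eq_sum hn, ← (hT.eigenvectorBasis hn).repr.norm_map x,
    EuclideanSpace.norm_sq_eq, Finset.mul_sum]
  refine Finset.sum_le_sum fun k _ => ?_
  rcases lt_or_ge k i with hki | hik
  · simp [hx k hki]
  · exact mul_le_mul_of_nonneg_right (hT.eigenvalues_antitone hn hik) (by positivity)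

theorem eigenvalues_mul_norm_sq_le {i : Fin n} {x : E}
    (hx : ∀ k, i < k → (hT.eigenvectorBasis hn).repr x k = 0) :
    hT.eigenvalues hn i * ‖x‖ ^ 2 ≤ re ⟪x, T x⟫_𝕜 := by
  rw [hT.re_inner_apply_self_eq_sum hn, ← (hT.eigenvectorBasis hn).repr.norm_map x,
    EuclideanSpace.norm_sq_eq, Finset.mul_sum]
  refine Finset.sum_le_sum fun k _ => ?_
  rcases lt_or_ge i k with hik | hki
  · simp [hx k hik]
  · exact mul_le_mul_of_nonneg_right (hT.eigenvalues_antitone hn hki) (by positivity)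

theorem le_eigenvalues_of_forall_mul_norm_sq_le (W : Submodule 𝕜 E) (i : Fin n)
    (hW : (i : ℕ) < finrank 𝕜 W) {c : ℝ} (hc : ∀ x ∈ W, c * ‖x‖ ^ 2 ≤ re ⟪x, T x⟫_𝕜) :
    c ≤ hT.eigenvalues hn i := by
  let coords : W →ₗ[𝕜] Fin i → 𝕜 := LinearMap.pi fun k =>
    (EuclideanSpace.proj (Fin.castLE i.is_lt.le k)).toLinearMap ∘ₗ
      (hT.eigenvectorBasis hn).repr.toLinearMap ∘ₗ W.subtype
  obtain ⟨x, hx_ker, hx_ne⟩ := Submodule.exists_mem_ne_zero_of_ne_bot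
    (coords.ker_ne_bot_of_finrank_lt (by simpa using hW))
  have hx_coords : ∀ k < i, (hT.eigenvectorBasis hn).repr x k = 0 := fun k hk =>
    congr_fun (LinearMap.mem_ker.mp hx_ker) ⟨k, hk⟩
  have hx_pos : 0 < ‖(x : E)‖ ^ 2 := by
    have : (x : E) ≠ 0 := by simpa using hx_ne
    positivity
  exact le_of_mul_le_mul_right ((hc x x.2).trans (hT.re_inner_apply_self_le hn hx_coords)) hx_pos

theorem exists_finrank_eq_forall_eigenvalues_mul_norm_sq_le (i : Fin n) :
    ∃ S : Submodule 𝕜 E, finrank 𝕜 S = i + 1 ∧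
      ∀ x ∈ S, hT.eigenvalues hn i * ‖x‖ ^ 2 ≤ re ⟪x, T x⟫_𝕜 := by
  let b := hT.eigenvectorBasis hn
  let top : Fin (i + 1) → Fin n := Fin.castLE i.is_lt
  refine ⟨Submodule.span 𝕜 (Set.range (b ∘ top)), ?_, fun x hx => ?_⟩
  · rw [finrank_span_eq_card (b.orthonormal.linearIndependent.comp top (Fin.castLE_injective _)),
      Fintype.card_fin]
  · obtain ⟨c, rfl⟩ := (Submodule.mem_span_range_iff_exists_fun 𝕜).mp hx
    refine hT.eigenvalues_mul_norm_sq_le hn fun k hik => ?_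
    simp only [b, map_sum, map_smul, Function.comp_apply, OrthonormalBasis.repr_self,
      WithLp.ofLp_sum, WithLp.ofLp_smul, Finset.sum_apply]
    refine Finset.sum_eq_zero fun l _ => ?_
    have : k ≠ top l := fun h => by simp [top, h, Fin.lt_def] at hik; omega
    simp [this]

end LinearMap.IsSymmetric

namespace Matrix

open WithLp

variable {𝕜 : Type*} [RCLike 𝕜] {m n : Type*} [Fintype m] [Fintype n]

theorem inner_toEuclideanLin_self [DecidableEq n] (A : Matrix n n 𝕜) (x : EuclideanSpace 𝕜 n) :
    ⟪x, toEuclideanLin A x⟫_𝕜 = star (ofLp x) ⬝ᵥ (A *ᵥ ofLp x) := by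
  rw [EuclideanSpace.inner_eq_star_dotProduct, dotProduct_comm]
  rfl

theorem _root_.EuclideanSpace.norm_sq_eq_re_dotProduct (x : EuclideanSpace 𝕜 n) :
    ‖x‖ ^ 2 = re (star (ofLp x) ⬝ᵥ ofLp x) := by
  rw [← inner_self_eq_norm_sq (𝕜 := 𝕜), EuclideanSpace.inner_eq_star_dotProduct, dotProduct_comm]

namespace PosSemidef

variable {M : Matrix m m 𝕜} {N : Matrix n n 𝕜} {K : Matrix m n 𝕜}

theorem four_mul_re_dotProduct_le (hZ : (fromBlocks M K Kᴴ N).PosSemidef)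
    (u : m → 𝕜) (v : n → 𝕜) :
    4 * re (star u ⬝ᵥ (K *ᵥ v)) ≤
      re (star (Sum.elim u v) ⬝ᵥ (fromBlocks M K Kᴴ N *ᵥ Sum.elim u v)) := by
  have expand : ∀ w : n → 𝕜, star (Sum.elim u w) ⬝ᵥ (fromBlocks M K Kᴴ N *ᵥ Sum.elim u w) =
      star u ⬝ᵥ (M *ᵥ u) + star w ⬝ᵥ (N *ᵥ w) +
        (star u ⬝ᵥ (K *ᵥ w) + star (star u ⬝ᵥ (K *ᵥ w))) := by
    intro w
    have cross : star w ⬝ᵥ (Kᴴ *ᵥ u) = star (star u ⬝ᵥ (K *ᵥ w)) := by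
      rw [star_dotProduct, star_mulVec, conjTranspose_conjTranspose, ← dotProduct_mulVec]
    rw [fromBlocks_mulVec, Function.star_sumElim, sumElim_dotProduct_sumElim]
    simp only [Sum.elim_comp_inl, Sum.elim_comp_inr, dotProduct_add, cross]
    ring
  have hneg := (RCLike.nonneg_iff.mp (hZ.dotProduct_mulVec_nonneg (Sum.elim u (-v)))).1
  rw [expand, mulVec_neg, dotProduct_neg, star_neg, neg_dotProduct, mulVec_neg, dotProduct_neg,
    neg_neg] at hneg
  rw [expand]
  simp only [map_add, map_neg, RCLike.star_def, RCLike.conj_re] at hneg ⊢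
  linarith

theorem two_mul_re_dotProduct_le (hZ : (fromBlocks M K Kᴴ N).PosSemidef) {σ : ℝ} (hσ : 0 ≤ σ)
    (v : n → 𝕜) (hv : σ ^ 2 * re (star v ⬝ᵥ v) ≤ re (star (K *ᵥ v) ⬝ᵥ (K *ᵥ v))) :
    2 * σ * re (star (Sum.elim (K *ᵥ v) ((σ : 𝕜) • v)) ⬝ᵥ Sum.elim (K *ᵥ v) ((σ : 𝕜) • v)) ≤
      re (star (Sum.elim (K *ᵥ v) ((σ : 𝕜) • v)) ⬝ᵥ
        (fromBlocks M K Kᴴ N *ᵥ Sum.elim (K *ᵥ v) ((σ : 𝕜) • v))) := by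
  refine le_trans ?_ (hZ.four_mul_re_dotProduct_le _ _)
  rw [Function.star_sumElim, sumElim_dotProduct_sumElim, mulVec_smul, dotProduct_smul, star_smul,
    smul_dotProduct, dotProduct_smul]
  simp only [RCLike.star_def, RCLike.conj_ofReal, smul_eq_mul, map_add, RCLike.re_ofReal_mul]
  nlinarith

variable [DecidableEq m] [DecidableEq n]

theorem two_mul_sqrt_eigenvalues₀_le (hZ : (fromBlocks M K Kᴴ N).PosSemidef) {j : ℕ}
    (hj : j < Fintype.card n) :
    2 * √((posSemidef_conjTranspose_mul_self K).isHermitian.eigenvalues₀ ⟨j, hj⟩) ≤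
      hZ.isHermitian.eigenvalues₀ ⟨j, by rw [Fintype.card_sum]; omega⟩ := by
  have hH := (posSemidef_conjTranspose_mul_self K).isHermitian
  have hZ_symm := isSymmetric_toEuclideanLin_iff.mpr hZ.isHermitian
  obtain hσ | hσ := (Real.sqrt_nonneg (hH.eigenvalues₀ ⟨j, hj⟩)).eq_or_lt
  · rw [← hσ, mul_zero]
    refine hZ_symm.le_eigenvalues_of_forall_mul_norm_sq_le finrank_euclideanSpace ⊤ _
      (by simp [Fintype.card_sum]; omega) fun x _ => ?_
    rw [zero_mul, inner_toEuclideanLin_self]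
    exact (RCLike.nonneg_iff.mp (hZ.dotProduct_mulVec_nonneg _)).1
  set σ := √(hH.eigenvalues₀ ⟨j, hj⟩)
  obtain ⟨S, hS, hS_bound⟩ := (isSymmetric_toEuclideanLin_iff.mpr hH)
    |>.exists_finrank_eq_forall_eigenvalues_mul_norm_sq_le finrank_euclideanSpace ⟨j, hj⟩
  let Φ := toEuclideanLin (fromRows K ((σ : 𝕜) • (1 : Matrix n n 𝕜)))
  have hΦ : ∀ v, Φ v = WithLp.toLp 2 (Sum.elim (K *ᵥ ofLp v) ((σ : 𝕜) • ofLp v)) := fun v => by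
    simp [Φ, toLpLin_apply, fromRows_mulVec, smul_mulVec]
  have hΦ_inj : Function.Injective Φ := by
    refine (injective_iff_map_eq_zero Φ).mpr fun v hv => ?_
    have h := congr_arg (fun x => ofLp x ∘ Sum.inr) hv
    simpa [hΦ, hσ.ne'] using h
  refine hZ_symm.le_eigenvalues_of_forall_mul_norm_sq_le finrank_euclideanSpace (S.map Φ) _ ?_ ?_
  · rw [← (Submodule.equivMapOfInjective Φ hΦ_inj S).finrank_eq, hS]
    exact Nat.lt_succ_self j
  · rintro _ ⟨v, hv, rfl⟩
    have hv_bound := hS_bound v hv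
    rw [inner_toEuclideanLin_self, EuclideanSpace.norm_sq_eq_re_dotProduct, ← mulVec_mulVec,
      dotProduct_mulVec, ← star_mulVec] at hv_bound
    rw [inner_toEuclideanLin_self, EuclideanSpace.norm_sq_eq_re_dotProduct, hΦ]
    refine hZ.two_mul_re_dotProduct_le hσ.le _ ?_
    rwa [Real.sq_sqrt (Real.sqrt_pos.mp hσ).le]

end PosSemidef

end Matrix

/-- Tao's theorem: the singular values of the off-diagonal block of a PSD block
matrix are dominated by half the eigenvalues of the whole matrix. -/
theorem tao_offdiagonal_block {m n : ℕ}
    (M : Matrix (Fin m) (Fin m) ℂ) (N : Matrix (Fin n) (Fin n) ℂ)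
    (K : Matrix (Fin m) (Fin n) ℂ)
    (hZ : (Matrix.fromBlocks M K Kᴴ N).PosSemidef)
    (j : ℕ) (hj : j < min m n) :
    svalDesc K j ≤ (1 / 2) * eigDesc (Matrix.fromBlocks M K Kᴴ N) j := by
  have hjn : j < Fintype.card (Fin n) := by simp; omega
  rw [svalDesc,
    eigDesc_eq_eigenvalues₀ (Matrix.posSemidef_conjTranspose_mul_self K).isHermitian hjn,
    eigDesc_eq_eigenvalues₀ hZ.isHermitian (by simp; omega)]
  linarith [hZ.two_mul_sqrt_eigenvalues₀_le hjn]
end
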